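/- Let k be a field of characteristic 2, G = C2 × C2 = ⟨g⟩ × ⟨h⟩, and let w be the 2-dimensional kG-module on which g acts trivially and h acts by the regular representation of C2. Let Ω(k) denote the augmentation ideal of kG (the kernel of the augmentation map kG → k), a 3-dimensional kG-module. Then Hom_w(Ω(k), k) ≠ 0; that is, there exists a kG-homomorphism Ω(k) → k which does not factor through any w-projective module. -/

import Mathlib

open CategoryTheory MonoidalCategory Limits

/-- `X` is `w`-projective: `X` is a direct summand of `w ⊗ Y` (diagonal `G`-action)
for some `kG`-module `Y`. -/
def IsRelProjective {k G : Type} [Field k] [Group G] (w X : Rep k G) : Prop :=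
  ∃ (Y : Rep k G) (i : X ⟶ w ⊗ Y) (r : w ⊗ Y ⟶ X), i ≫ r = 𝟙 X

/-- `f` factors through some `w`-projective module. -/
def FactorsThroughRelProj {k G : Type} [Field k] [Group G] (w : Rep k G)
    {X Y : Rep k G} (f : X ⟶ Y) : Prop :=
  ∃ (Z : Rep k G) (g : X ⟶ Z) (h : Z ⟶ Y), IsRelProjective w Z ∧ g ≫ h = f

/-- The cyclic group of order 2. -/
abbrev CycTwo : Type := Multiplicative (ZMod 2)

/-- The Klein four group `G = C2 × C2 = ⟨g⟩ × ⟨h⟩`. -/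
abbrev KleinFour : Type := CycTwo × CycTwo

/-- The 2-dimensional `kG`-module `k[C2]` on which the first factor `⟨g⟩` of the Klein
four group acts trivially and the second factor `⟨h⟩` acts by the regular
representation of `C2`; i.e. `w ≅ Ind_{⟨g⟩×1}^G (k)`. -/
noncomputable def wKlein (k : Type) [Field k] : Rep k KleinFour :=
  Rep.of ((Representation.ofMulAction k CycTwo CycTwo).comp (MonoidHom.snd CycTwo CycTwo))

/-- The regular module `kG` (the group algebra with the left regular action). -/
noncomputable def regRep (k G : Type) [Field k] [Group G] : Rep k G :=
  Rep.of (Representation.ofMulAction k G G)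

/-- The augmentation map `kG → k`, sending each group element to `1`, as a morphism
of representations. -/
noncomputable def augmentation (k G : Type) [Field k] [Group G] :
    regRep k G ⟶ Rep.trivial k G k := Rep.ofHom
  { toLinearMap := Finsupp.linearCombination k (fun _ => (1 : k)) ∘ₗ
      (MonoidAlgebra.coeffLinearEquiv k).toLinearMap
    isIntertwining' := fun g => by
      refine MonoidAlgebra.lhom_ext' fun a => LinearMap.ext fun b => ?_
      simp [MonoidAlgebra.lsingle_apply, Representation.ofMulAction_single] }

/-- `Ω(k)`: the augmentation ideal of `kG`, the kernel of the augmentation `kG → k`. -/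
noncomputable def augIdeal (k G : Type) [Field k] [Group G] : Rep k G :=
  kernel (augmentation k G)

/-!
Weighting the coefficients of `z ∈ kG` by the additive character `χ : G → k` with `χ(g) = 1`,
`χ(h) = 0` gives a `kG`-map `f : Ω(k) → k` (the error term `χ(σ) ε(z)` vanishes on `Ω(k)`), and
`f(g - 1) = 1`. In `Ω(k)` the elements `x = g - 1` and `y = h - 1` satisfy `(h - 1)x = (g - 1)y`,
so it suffices that every `kG`-map `b : w ⊗ Y → k` kills each `m` with
`(h - 1)m ∈ (g - 1)(w ⊗ Y)`. Let `π` be the projection of `w = k[C2]` onto `k·1` along `k·h` and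
`γ = b ∘ (π ⊗ 1)`. Since `π + hπh = 1` and `b` is `h`-invariant, `b = γ + γ ∘ h`; since `g` acts
trivially on `w`, `γ` is `g`-invariant. Hence `γ(hm) = γ(m)` and `b(m) = 2γ(m) = 0`.
-/

section RelProjective

open TensorProduct

variable {k G : Type} [Field k] [Group G] {W Y : Rep k G} (b : W ⊗ Y ⟶ Rep.trivial k G k)
  (p : W →ₗ[k] W)

theorem Rep.hom_ρ_apply_of_trivial {X : Rep k G} (f : X ⟶ Rep.trivial k G k) (σ : G) (x : X) :
    f.hom (X.ρ σ x) = f.hom x :=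
  Rep.hom_comm_apply f σ x

theorem Rep.tensor_ρ_tmul (σ : G) (v : W) (y : Y) :
    (W ⊗ Y).ρ σ (v ⊗ₜ y) = W.ρ σ v ⊗ₜ Y.ρ σ y :=
  rfl

theorem Rep.hom_rTensor_ρ_of_ρ_eq_id {σ : G} (hσ : W.ρ σ = LinearMap.id) (m : (W ⊗ Y).V) :
    b.hom (p.rTensor Y ((W ⊗ Y).ρ σ m)) = b.hom (p.rTensor Y m) := by
  have hρ : (W ⊗ Y).ρ σ = (Y.ρ σ).lTensor W := by
    rw [Rep.tensor_ρ, Representation.tprod_apply, hσ]; rfl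
  rw [hρ, ← LinearMap.comp_apply (p.rTensor Y), LinearMap.rTensor_comp_lTensor,
    ← LinearMap.lTensor_comp_rTensor, LinearMap.comp_apply, ← hρ, Rep.hom_ρ_apply_of_trivial]

theorem Rep.hom_eq_rTensor_add_rTensor_ρ {τ : G} (hτ : τ * τ = 1)
    (hp : p + W.ρ τ ∘ₗ p ∘ₗ W.ρ τ = LinearMap.id) (m : (W ⊗ Y).V) :
    b.hom m = b.hom (p.rTensor Y m) + b.hom (p.rTensor Y ((W ⊗ Y).ρ τ m)) := by
  induction m using TensorProduct.induction_on with
  | zero => simp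
  | tmul v y =>
    have hτ' : Y.ρ τ (Y.ρ τ y) = y := by rw [← Module.End.mul_apply, ← map_mul, hτ, map_one]; rfl
    have hswap : b.hom (p (W.ρ τ v) ⊗ₜ Y.ρ τ y) = b.hom ((W.ρ τ (p (W.ρ τ v))) ⊗ₜ y) := by
      rw [← Rep.hom_ρ_apply_of_trivial b τ, Rep.tensor_ρ_tmul, hτ']
    have hv : p v + W.ρ τ (p (W.ρ τ v)) = v := LinearMap.congr_fun hp v
    rw [Rep.tensor_ρ_tmul, LinearMap.rTensor_tmul, LinearMap.rTensor_tmul, hswap, ← map_add,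
      ← TensorProduct.add_tmul, hv]
  | add m m' hm hm' => simp only [map_add, hm, hm']; abel

theorem Rep.hom_eq_zero_of_ρ_sub_eq_ρ_sub [CharP k 2] {σ τ : G} (hσ : W.ρ σ = LinearMap.id)
    (hτ : τ * τ = 1) (hp : p + W.ρ τ ∘ₗ p ∘ₗ W.ρ τ = LinearMap.id) {m n : (W ⊗ Y).V}
    (h : (W ⊗ Y).ρ τ m - m = (W ⊗ Y).ρ σ n - n) : b.hom m = 0 := by
  set γ : (W ⊗ Y).V →ₗ[k] k := b.hom.toLinearMap ∘ₗ p.rTensor Y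
  have hγ : γ ((W ⊗ Y).ρ τ m) = γ m := by
    rw [← sub_eq_zero, ← map_sub, h, map_sub, sub_eq_zero]
    exact Rep.hom_rTensor_ρ_of_ρ_eq_id b p hσ n
  calc b.hom m = γ m + γ ((W ⊗ Y).ρ τ m) := Rep.hom_eq_rTensor_add_rTensor_ρ b p hτ hp m
    _ = 0 := by rw [hγ, CharTwo.add_self_eq_zero]

theorem FactorsThroughRelProj.hom_eq_zero_of_ρ_sub_eq_ρ_sub [CharP k 2] {X : Rep k G}
    {f : X ⟶ Rep.trivial k G k} (hf : FactorsThroughRelProj W f) {σ τ : G}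
    (hσ : W.ρ σ = LinearMap.id) (hτ : τ * τ = 1) (hp : p + W.ρ τ ∘ₗ p ∘ₗ W.ρ τ = LinearMap.id)
    {x y : X} (h : X.ρ τ x - x = X.ρ σ y - y) : f.hom x = 0 := by
  obtain ⟨Z, a, c, ⟨Y, i, r, hir⟩, rfl⟩ := hf
  have hfac : a ≫ c = (a ≫ i) ≫ r ≫ c := by rw [Category.assoc, reassoc_of% hir]
  rw [hfac]
  change (r ≫ c).hom ((a ≫ i).hom x) = 0
  refine Rep.hom_eq_zero_of_ρ_sub_eq_ρ_sub _ p hσ hτ hp (n := (a ≫ i).hom y) ?_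
  simp only [← Rep.hom_comm_apply, ← map_sub, h]

end RelProjective

universe u v in
theorem Rep.exists_kernel_ι_hom_eq {k : Type u} {G : Type v} [Field k] [Group G]
    {A B : Rep.{max u v} k G} (f : A ⟶ B) {z : A} (hz : f.hom z = 0) :
    ∃ x, (kernel.ι f).hom x = z := by
  have hcond : Rep.leftRegularHom A z ≫ f = 0 := by
    ext : 2
    refine MonoidAlgebra.lhom_ext' fun σ => LinearMap.ext_ring ?_
    simp [Rep.hom_comm_apply, hz]
  refine ⟨(kernel.lift f _ hcond).hom (MonoidAlgebra.single 1 1), ?_⟩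
  rw [← Rep.comp_apply, kernel.lift_ι, Rep.leftRegularHom_hom_single, map_one, one_smul]
  rfl

section AugmentationIdeal

variable {k G : Type} [Field k] [Group G]

variable (k G) in
noncomputable def augIdeal.ι : augIdeal k G ⟶ regRep k G :=
  kernel.ι (augmentation k G)

theorem augIdeal.ι_injective : Function.Injective (augIdeal.ι k G).hom :=
  (Rep.mono_iff_injective _).1 (inferInstanceAs (Mono (kernel.ι (augmentation k G))))

theorem augmentation_ι_apply (x : augIdeal k G) :
    (augmentation k G).hom ((augIdeal.ι k G).hom x) = 0 :=
  congr($(kernel.condition (augmentation k G)).hom x)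

theorem augIdeal.exists_ι_eq {z : regRep k G} (hz : (augmentation k G).hom z = 0) :
    ∃ x, (augIdeal.ι k G).hom x = z :=
  Rep.exists_kernel_ι_hom_eq _ hz

theorem regRep_ρ_single (σ τ : G) (a : k) :
    (regRep k G).ρ σ (MonoidAlgebra.single τ a) = MonoidAlgebra.single (σ * τ) a :=
  Representation.ofMulAction_single σ τ a

theorem augmentation_single (σ : G) (a : k) :
    (augmentation k G).hom (MonoidAlgebra.single σ a) = a := by
  change Finsupp.linearCombination k (fun _ => (1 : k)) (Finsupp.single σ a) = a
  simp

variable (χ : G →* Multiplicative k)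

noncomputable def charWeight : regRep k G →ₗ[k] k :=
  Finsupp.linearCombination k (fun σ => (χ σ).toAdd) ∘ₗ
    (MonoidAlgebra.coeffLinearEquiv k).toLinearMap

theorem charWeight_single (σ : G) (a : k) :
    charWeight χ (MonoidAlgebra.single σ a) = a * (χ σ).toAdd := by
  change Finsupp.linearCombination k _ (Finsupp.single σ a) = _
  simp

theorem charWeight_comp_ρ (σ : G) :
    charWeight χ ∘ₗ (regRep k G).ρ σ =
      charWeight χ + (χ σ).toAdd • (augmentation k G).hom.toLinearMap := by
  refine MonoidAlgebra.lhom_ext' fun τ => LinearMap.ext_ring ?_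
  change charWeight χ ((regRep k G).ρ σ (MonoidAlgebra.single τ 1)) =
    charWeight χ (MonoidAlgebra.single τ 1) +
      (χ σ).toAdd * (augmentation k G).hom (MonoidAlgebra.single τ 1)
  rw [regRep_ρ_single, charWeight_single, charWeight_single, augmentation_single, map_mul,
    toAdd_mul]
  ring

theorem charWeight_ρ_sub (σ : G) (z : regRep k G) :
    charWeight χ ((regRep k G).ρ σ z - z) = (χ σ).toAdd * (augmentation k G).hom z := by
  rw [map_sub, ← LinearMap.comp_apply, charWeight_comp_ρ]
  simp

noncomputable def augIdealHomOfChar : augIdeal k G ⟶ Rep.trivial k G k :=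
  ConcreteCategory.ofHom (C := Rep k G)
    ⟨charWeight χ ∘ₗ (augIdeal.ι k G).hom.toLinearMap, fun σ => by
      ext x
      change charWeight χ ((augIdeal.ι k G).hom ((augIdeal k G).ρ σ x)) =
        charWeight χ ((augIdeal.ι k G).hom x)
      rw [Rep.hom_comm_apply, ← LinearMap.comp_apply, charWeight_comp_ρ, LinearMap.add_apply,
        LinearMap.smul_apply, Representation.IntertwiningMap.toLinearMap_apply,
        augmentation_ι_apply, smul_zero, add_zero]⟩

theorem augIdealHomOfChar_hom_apply (x : augIdeal k G) :
    (augIdealHomOfChar χ).hom x = charWeight χ ((augIdeal.ι k G).hom x) :=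
  rfl

end AugmentationIdeal

theorem Rep.ρ_sub_comm {k G : Type} [Field k] [CommGroup G] (A : Rep k G) (σ τ : G) (z : A) :
    A.ρ τ (A.ρ σ z - z) - (A.ρ σ z - z) = A.ρ σ (A.ρ τ z - z) - (A.ρ τ z - z) := by
  have hcomm : A.ρ τ (A.ρ σ z) = A.ρ σ (A.ρ τ z) := by
    rw [← Module.End.mul_apply, ← map_mul, mul_comm, map_mul, Module.End.mul_apply]
  rw [map_sub, map_sub, hcomm]
  abel

theorem augIdeal.ρ_sub_eq_ρ_sub {k G : Type} [Field k] [CommGroup G] {σ τ : G}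
    {z : regRep k G} {x y : augIdeal k G} (hx : (augIdeal.ι k G).hom x = (regRep k G).ρ σ z - z)
    (hy : (augIdeal.ι k G).hom y = (regRep k G).ρ τ z - z) :
    (augIdeal k G).ρ τ x - x = (augIdeal k G).ρ σ y - y := by
  apply augIdeal.ι_injective
  rw [map_sub, map_sub, Rep.hom_comm_apply, Rep.hom_comm_apply, hx, hy, Rep.ρ_sub_comm]

section KleinFour

variable (k : Type) [Field k]

abbrev KleinFour.g : KleinFour := (Multiplicative.ofAdd 1, 1)

abbrev KleinFour.h : KleinFour := (1, Multiplicative.ofAdd 1)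

theorem CycTwo.eq_one_or_eq_ofAdd_one (c : CycTwo) : c = 1 ∨ c = Multiplicative.ofAdd 1 := by
  revert c; decide

theorem CycTwo.ofAdd_one_mul_self :
    (Multiplicative.ofAdd 1 : CycTwo) * Multiplicative.ofAdd 1 = 1 :=
  rfl

theorem wKlein_ρ_g : (wKlein k).ρ KleinFour.g = LinearMap.id :=
  map_one (Representation.ofMulAction k CycTwo CycTwo)

noncomputable def CycTwo.proj : MonoidAlgebra k CycTwo →ₗ[k] MonoidAlgebra k CycTwo :=
  MonoidAlgebra.lsingle 1 ∘ₗ Finsupp.lapply 1 ∘ₗ (MonoidAlgebra.coeffLinearEquiv k).toLinearMap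

theorem CycTwo.proj_add_conj_proj :
    let t := Representation.ofMulAction k CycTwo CycTwo (Multiplicative.ofAdd 1)
    CycTwo.proj k + t ∘ₗ CycTwo.proj k ∘ₗ t = LinearMap.id := by
  ext c
  rcases CycTwo.eq_one_or_eq_ofAdd_one c with rfl | rfl <;>
    simp [CycTwo.proj, Representation.ofMulAction_single, CycTwo.ofAdd_one_mul_self]

noncomputable def wKlein.proj : wKlein k →ₗ[k] wKlein k := CycTwo.proj k

theorem wKlein.proj_add_conj_proj :
    wKlein.proj k + (wKlein k).ρ KleinFour.h ∘ₗ wKlein.proj k ∘ₗ (wKlein k).ρ KleinFour.h =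
      LinearMap.id :=
  CycTwo.proj_add_conj_proj k

noncomputable def kleinChar [CharP k 2] : KleinFour →* Multiplicative k :=
  (AddMonoidHom.toMultiplicative (ZMod.castHom (dvd_refl 2) k).toAddMonoidHom).comp
    (MonoidHom.fst CycTwo CycTwo)

end KleinFour

/-- Over the Klein four group in characteristic 2, with `w = Ind_{⟨g⟩×1}^G(k)`,
`Hom_w(Ω(k), k) ≠ 0`: there is a `kG`-homomorphism `Ω(k) → k` that does not factor
through any `w`-projective module. -/
theorem homW_omega_trivial_ne_zero (k : Type) [Field k] [CharP k 2] :
    ∃ f : augIdeal k KleinFour ⟶ Rep.trivial k KleinFour k,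
      ¬ FactorsThroughRelProj (wKlein k) f := by
  set e : regRep k KleinFour := MonoidAlgebra.single 1 1
  have hε (σ : KleinFour) :
      (augmentation k KleinFour).hom ((regRep k KleinFour).ρ σ e - e) = 0 := by
    rw [map_sub, Rep.hom_ρ_apply_of_trivial, sub_self]
  obtain ⟨x, hx⟩ := augIdeal.exists_ι_eq (hε KleinFour.g)
  obtain ⟨y, hy⟩ := augIdeal.exists_ι_eq (hε KleinFour.h)
  refine ⟨augIdealHomOfChar (kleinChar k), fun hf => ?_⟩
  have hzero := hf.hom_eq_zero_of_ρ_sub_eq_ρ_sub (wKlein.proj k) (wKlein_ρ_g k) rfl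
    (wKlein.proj_add_conj_proj k) (augIdeal.ρ_sub_eq_ρ_sub hx hy)
  have hone : (augIdealHomOfChar (kleinChar k)).hom x = 1 := by
    rw [augIdealHomOfChar_hom_apply, hx, charWeight_ρ_sub, augmentation_single, mul_one]
    simp [kleinChar]
  exact one_ne_zero (hone.symm.trans hzero)
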